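/- arXiv:2308.13303 — 2 statements merged into one kernel-verified Lean document; each statement's English description precedes it below -/
import Mathlib

section
/- The peak AoI of the network over the horizon [0,T] admits the closed form: sup over all vertices v ∈ V and all real t ∈ [0,T] of A(v,t) equals max over v ∈ V of the maximum of the three quantities (a) A₀ + τ₁(v), (b) 1 + T − t_k, and (c) max over 2 ≤ j ≤ k_v of ( 1 + dist(s_{i_j}, v) + t_{i_j} − t_{i_{j−1}} ) (the maximum in (c) being over an empty set, hence omitted, when k_v = 1). -/
/-
By the update rule, `A(v, t+1) = min (A(v, t) + 1) (1 + dist(s_x, v))` over the seeds `x`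
arriving at `t + 1`, so by induction `A(v, t) = min (A₀ + t) (1 + t - t_x)` over the seeds
already arrived: the age is `A₀ + t` before the first arrival and `1 + t - t_x` for the
latest seed `x` arrived so far. That seed survives, so it is some `s_{i_j}`, and the age grows
with slope one on `[τ_j, τ_{j+1})`. Its supremum there is the value just before `τ_{j+1}`,
which is term (c); before `τ_1` the supremum is term (a), and after `τ_{k_v}` the age reaches
term (b) at `T`.
-/

open Finset

def tsel (Δ j : ℕ) : ℕ := (j - 1) * Δ + 1

noncomputable def AoI {V : Type*} (G : SimpleGraph V) (s : ℕ → V) (Δ k A0 : ℕ) (v : V) :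
    ℕ → ℕ
  | 0 => A0
  | t + 1 =>
    let prev := AoI G s Δ k A0 v t
    let Ω : Finset ℕ := (Finset.Icc 1 k).filter
      (fun j => t + 1 = tsel Δ j + G.dist (s j) v ∧ G.dist (s j) v + 1 ≤ prev)
    if h : Ω.Nonempty then Ω.inf' h (fun j => 1 + G.dist (s j) v) else prev + 1

noncomputable def AoIR {V : Type*} (G : SimpleGraph V) (s : ℕ → V) (Δ k A0 : ℕ) (v : V)
    (t : ℝ) : ℝ :=
  (AoI G s Δ k A0 v ⌊t⌋₊ : ℝ) + (t - ⌊t⌋₊)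

open scoped Classical in
noncomputable def Dset {V : Type*} (G : SimpleGraph V) (s : ℕ → V) (Δ k : ℕ) (v : V) :
    Finset ℕ :=
  (Finset.Icc 1 k).filter (fun x => ∀ y ∈ Finset.Icc 1 k, x < y →
    tsel Δ x + G.dist (s x) v < tsel Δ y + G.dist (s y) v)

theorem tsel_mono (Δ : ℕ) : Monotone (tsel Δ) := fun _ _ h => by
  unfold tsel
  gcongr

theorem one_le_tsel (Δ j : ℕ) : 1 ≤ tsel Δ j := Nat.le_add_left 1 _

section

variable {V : Type*} {G : SimpleGraph V} {s : ℕ → V} {Δ k A0 : ℕ} {v : V}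

variable (G s Δ v) in
noncomputable def arrivalTime (x : ℕ) : ℕ := tsel Δ x + G.dist (s x) v

variable (G s Δ v) in
theorem tsel_le_arrivalTime (x : ℕ) : tsel Δ x ≤ arrivalTime G s Δ v x := Nat.le_add_right _ _

variable (G s Δ v) in
theorem one_le_arrivalTime (x : ℕ) : 1 ≤ arrivalTime G s Δ v x :=
  (one_le_tsel Δ x).trans (tsel_le_arrivalTime G s Δ v x)

namespace AoI

/-- A seed is accepted exactly when it beats the aged value, so the update is a minimum. -/
theorem succ_isLeast (t : ℕ) :
    IsLeast {n | n = AoI G s Δ k A0 v t + 1 ∨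
      ∃ x ∈ Icc 1 k, arrivalTime G s Δ v x = t + 1 ∧ n = 1 + G.dist (s x) v}
      (AoI G s Δ k A0 v (t + 1)) := by
  simp only [AoI]
  split_ifs with hΩ
  · obtain ⟨x, hx, hmin⟩ := Finset.exists_mem_eq_inf' hΩ (fun j => 1 + G.dist (s j) v)
    rw [mem_filter] at hx
    refine ⟨Or.inr ⟨x, hx.1, hx.2.1.symm, hmin⟩, ?_⟩
    rintro n (rfl | ⟨y, hy, harr, rfl⟩)
    · omega
    · by_cases hage : G.dist (s y) v + 1 ≤ AoI G s Δ k A0 v t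
      · exact Finset.inf'_le _ (mem_filter.2 ⟨hy, harr.symm, hage⟩)
      · omega
  · refine ⟨Or.inl rfl, ?_⟩
    rintro n (rfl | ⟨y, hy, harr, rfl⟩)
    · exact le_rfl
    · by_contra hlt
      exact hΩ ⟨y, mem_filter.2 ⟨hy, harr.symm, by omega⟩⟩

theorem succ_le (t : ℕ) : AoI G s Δ k A0 v (t + 1) ≤ AoI G s Δ k A0 v t + 1 :=
  (succ_isLeast t).2 (Or.inl rfl)

-- `n + tsel Δ x = 1 + t` stands for `n = 1 + t - tsel Δ x` without truncated subtraction.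
theorem isLeast (t : ℕ) :
    IsLeast {n | n = A0 + t ∨
      ∃ x ∈ Icc 1 k, arrivalTime G s Δ v x ≤ t ∧ n + tsel Δ x = 1 + t}
      (AoI G s Δ k A0 v t) := by
  induction t with
  | zero =>
    refine ⟨Or.inl rfl, ?_⟩
    rintro n (rfl | ⟨x, -, harr, -⟩)
    · exact le_rfl
    · have := one_le_arrivalTime G s Δ v x; omega
  | succ t ih =>
    obtain ⟨hmem, hlow⟩ := succ_isLeast (G := G) (s := s) (Δ := Δ) (k := k) (A0 := A0) (v := v) t
    constructor
    · rcases hmem with heq | ⟨x, hx, harr, heq⟩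
      · rcases ih.1 with h | ⟨x, hx, harr, h⟩
        · exact Or.inl (by omega)
        · exact Or.inr ⟨x, hx, by omega, by omega⟩
      · exact Or.inr ⟨x, hx, harr.le, by unfold arrivalTime at harr; omega⟩
    · rintro n (rfl | ⟨x, hx, harr, hn⟩)
      · exact (hlow (Or.inl rfl)).trans (by have := ih.2 (Or.inl rfl); omega)
      · have := tsel_le_arrivalTime G s Δ v x
        rcases harr.lt_or_eq with harr | harr
        · have := ih.2 (Or.inr ⟨x, hx, by omega, (by omega : n - 1 + tsel Δ x = 1 + t)⟩)
          exact (hlow (Or.inl rfl)).trans (by omega)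
        · exact hlow (Or.inr ⟨x, hx, harr, by unfold arrivalTime at harr; omega⟩)

theorem eq_of_lt_arrivalTime {t : ℕ} (h : ∀ x ∈ Icc 1 k, t < arrivalTime G s Δ v x) :
    AoI G s Δ k A0 v t = A0 + t := by
  rcases (isLeast (G := G) (s := s) (Δ := Δ) (k := k) (A0 := A0) (v := v) t).1 with
    heq | ⟨x, hx, harr, -⟩
  · exact heq
  · exact absurd harr (h x hx).not_ge

theorem add_tsel_eq {t x : ℕ} (hx : x ∈ Icc 1 k) (harr : arrivalTime G s Δ v x ≤ t)
    (hlatest : ∀ y ∈ Icc 1 k, arrivalTime G s Δ v y ≤ t → y ≤ x) :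
    AoI G s Δ k A0 v t + tsel Δ x = 1 + t := by
  obtain ⟨hmem, hlow⟩ := isLeast (G := G) (s := s) (Δ := Δ) (k := k) (A0 := A0) (v := v) t
  have := one_le_tsel Δ x
  have := tsel_le_arrivalTime G s Δ v x
  have hle := hlow (Or.inr ⟨x, hx, harr, (Nat.sub_add_cancel (by omega) :
      1 + t - tsel Δ x + tsel Δ x = 1 + t)⟩)
  rcases hmem with heq | ⟨y, hy, hyarr, heq⟩
  · omega
  · have := tsel_mono Δ (hlatest y hy hyarr)
    omega

end AoI

theorem mem_Dset {x : ℕ} : x ∈ Dset G s Δ k v ↔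
    x ∈ Icc 1 k ∧ ∀ y ∈ Icc 1 k, x < y → arrivalTime G s Δ v x < arrivalTime G s Δ v y := by
  simp only [Dset, mem_filter, arrivalTime]

theorem self_mem_Dset (hk : 1 ≤ k) : k ∈ Dset G s Δ k v :=
  mem_Dset.2 ⟨mem_Icc.2 ⟨hk, le_rfl⟩, fun _ hy hky => absurd (mem_Icc.1 hy).2 hky.not_ge⟩

-- Witness: the last seed `z ≥ x` arriving no later than `x`.
theorem exists_mem_Dset_arrivalTime_le {x : ℕ} (hx : x ∈ Icc 1 k) :
    ∃ z ∈ Dset G s Δ k v, x ≤ z ∧ arrivalTime G s Δ v z ≤ arrivalTime G s Δ v x := by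
  classical
  set C := (Icc x k).filter fun y => arrivalTime G s Δ v y ≤ arrivalTime G s Δ v x
  have hxC : x ∈ C := mem_filter.2 ⟨mem_Icc.2 ⟨le_rfl, (mem_Icc.1 hx).2⟩, le_rfl⟩
  obtain ⟨hzI, hzarr⟩ := mem_filter.1 (C.max'_mem ⟨x, hxC⟩)
  rw [mem_Icc] at hx hzI
  refine ⟨C.max' ⟨x, hxC⟩, mem_Dset.2 ⟨mem_Icc.2 ⟨by omega, hzI.2⟩, fun y hy hzy => ?_⟩,
    hzI.1, hzarr⟩
  have hyC : y ∉ C := fun hyC => (C.le_max' y hyC).not_gt hzy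
  rw [mem_filter, mem_Icc] at hyC
  rw [mem_Icc] at hy
  have : ¬ arrivalTime G s Δ v y ≤ arrivalTime G s Δ v x := fun h => hyC ⟨⟨by omega, hy.2⟩, h⟩
  omega

theorem mem_Dset_of_latest {t x : ℕ} (hx : x ∈ Icc 1 k) (harr : arrivalTime G s Δ v x ≤ t)
    (hlatest : ∀ y ∈ Icc 1 k, arrivalTime G s Δ v y ≤ t → y ≤ x) : x ∈ Dset G s Δ k v :=
  mem_Dset.2 ⟨hx, fun y hy hxy => by
    by_contra! h
    exact (hlatest y hy (h.trans harr)).not_gt hxy⟩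

section Enumeration

variable {i : ℕ → ℕ} {n : ℕ} (hmono : StrictMonoOn i (Set.Icc 1 n))
  (him : Dset G s Δ k v = (Icc 1 n).image i)
include him

theorem mem_Dset_enum {j : ℕ} (hj : j ∈ Icc 1 n) : i j ∈ Dset G s Δ k v :=
  him ▸ mem_image_of_mem i hj

theorem enum_mem_Icc {j : ℕ} (hj : j ∈ Icc 1 n) : i j ∈ Icc 1 k :=
  (mem_Dset.1 (mem_Dset_enum him hj)).1

include hmono

theorem arrivalTime_enum_strictMonoOn :
    StrictMonoOn (fun j => arrivalTime G s Δ v (i j)) (Set.Icc 1 n) := fun _ ha _ hb hab =>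
  (mem_Dset.1 (mem_Dset_enum him (mem_Icc.2 ha))).2 _ (enum_mem_Icc him (mem_Icc.2 hb))
    (hmono ha hb hab)

theorem one_le_and_enum_last (hk : 1 ≤ k) : 1 ≤ n ∧ i n = k := by
  obtain ⟨a, ha, hak⟩ := mem_image.1 (him ▸ self_mem_Dset (G := G) (s := s) (Δ := Δ) (v := v) hk)
  rw [mem_Icc] at ha
  have hn : n ∈ Icc 1 n := mem_Icc.2 ⟨ha.1.trans ha.2, le_rfl⟩
  have := hmono.monotoneOn ha (mem_Icc.1 hn) ha.2
  have := (mem_Icc.1 (enum_mem_Icc him hn)).2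
  omega

theorem exists_lt_le_enum_of_arrivalTime_lt {j y : ℕ} (hj : j ∈ Icc 1 n) (hy : y ∈ Icc 1 k)
    (h : arrivalTime G s Δ v y < arrivalTime G s Δ v (i j)) :
    ∃ j' ∈ Icc 1 n, j' < j ∧ y ≤ i j' := by
  obtain ⟨z, hz, hyz, hzarr⟩ :=
    exists_mem_Dset_arrivalTime_le (G := G) (s := s) (Δ := Δ) (v := v) hy
  obtain ⟨j', hj', rfl⟩ := mem_image.1 (him ▸ hz)
  refine ⟨j', hj', ?_, hyz⟩
  by_contra! hjj'
  have := (arrivalTime_enum_strictMonoOn hmono him).monotoneOn (mem_Icc.1 hj) (mem_Icc.1 hj') hjj'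
  omega

theorem AoI_eq_of_lt_arrivalTime_enum_one (hk : 1 ≤ k) {t : ℕ}
    (ht : t < arrivalTime G s Δ v (i 1)) : AoI G s Δ k A0 v t = A0 + t :=
  AoI.eq_of_lt_arrivalTime fun y hy => by
    by_contra! h
    have h1 : 1 ∈ Icc 1 n := mem_Icc.2 ⟨le_rfl, (one_le_and_enum_last hmono him hk).1⟩
    obtain ⟨j', hj', hlt, -⟩ := exists_lt_le_enum_of_arrivalTime_lt hmono him h1 hy (by omega)
    exact (mem_Icc.1 hj').1.not_gt hlt

theorem AoI_add_tsel_enum_pred {j : ℕ} (hj : j ∈ Icc 2 n) :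
    AoI G s Δ k A0 v (arrivalTime G s Δ v (i j) - 1) + tsel Δ (i (j - 1)) =
      arrivalTime G s Δ v (i j) := by
  rw [mem_Icc] at hj
  have hj1 : j ∈ Set.Icc 1 n := ⟨by omega, hj.2⟩
  have hpred : j - 1 ∈ Set.Icc 1 n := ⟨by omega, by omega⟩
  have hlt : arrivalTime G s Δ v (i (j - 1)) < arrivalTime G s Δ v (i j) :=
    arrivalTime_enum_strictMonoOn hmono him hpred hj1 (by omega)
  have := AoI.add_tsel_eq (A0 := A0) (enum_mem_Icc him (mem_Icc.2 hpred))
    (Nat.le_sub_one_of_lt hlt)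
    fun y hy hyarr => by
      obtain ⟨j', hj', hj'j, hyj'⟩ :=
        exists_lt_le_enum_of_arrivalTime_lt hmono him (mem_Icc.2 hj1) hy (by omega)
      exact hyj'.trans (hmono.monotoneOn (mem_Icc.1 hj') hpred (by omega))
  omega

theorem AoI_add_tsel_of_arrivalTime_last_le (hk : 1 ≤ k) {t : ℕ}
    (ht : arrivalTime G s Δ v (i n) ≤ t) : AoI G s Δ k A0 v t + tsel Δ k = 1 + t := by
  rw [(one_le_and_enum_last hmono him hk).2] at ht
  exact AoI.add_tsel_eq (mem_Icc.2 ⟨hk, le_rfl⟩) ht fun y hy _ => (mem_Icc.1 hy).2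

end Enumeration

theorem forall_lt_arrivalTime_or_exists_latest (t : ℕ) :
    (∀ y ∈ Icc 1 k, t < arrivalTime G s Δ v y) ∨
      ∃ x ∈ Icc 1 k, arrivalTime G s Δ v x ≤ t ∧
        ∀ y ∈ Icc 1 k, arrivalTime G s Δ v y ≤ t → y ≤ x := by
  classical
  set R := (Icc 1 k).filter fun y => arrivalTime G s Δ v y ≤ t
  rcases R.eq_empty_or_nonempty with hR | hR
  · refine Or.inl fun y hy => ?_
    by_contra! h
    exact Finset.notMem_empty y (hR ▸ mem_filter.2 ⟨hy, h⟩)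
  · obtain ⟨hx, hxt⟩ := mem_filter.1 (R.max'_mem hR)
    exact Or.inr ⟨_, hx, hxt, fun y hy h => R.le_max' y (mem_filter.2 ⟨hy, h⟩)⟩

variable (G s Δ k A0) in
noncomputable def peakAoI (T : ℕ) (i : ℕ → ℕ) (n : ℕ) (v : V) : ℕ :=
  max (A0 + tsel Δ (i 1) + G.dist (s (i 1)) v)
    (max (1 + T - tsel Δ k)
      ((Icc 2 n).sup fun j => 1 + G.dist (s (i j)) v + (tsel Δ (i j) - tsel Δ (i (j - 1)))))

section Peak

variable {T : ℕ} {i : ℕ → ℕ} {n : ℕ} (hk : 1 ≤ k) (hmono : StrictMonoOn i (Set.Icc 1 n))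
  (him : Dset G s Δ k v = (Icc 1 n).image i) (hT : arrivalTime G s Δ v (i n) ≤ T)
include hk hmono him hT

theorem AoI_le_peakAoI : AoI G s Δ k A0 v T ≤ peakAoI G s Δ k A0 T i n v := by
  have := AoI_add_tsel_of_arrivalTime_last_le (A0 := A0) hmono him hk hT
  exact le_max_of_le_right (le_max_of_le_left (by omega))

theorem AoI_add_one_le_peakAoI {m : ℕ} (hm : m < T) :
    AoI G s Δ k A0 v m + 1 ≤ peakAoI G s Δ k A0 T i n v := by
  obtain ⟨hn, hlast⟩ := one_le_and_enum_last hmono him hk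
  rcases forall_lt_arrivalTime_or_exists_latest (G := G) (s := s) (Δ := Δ) (v := v) (k := k) m
    with hnone | ⟨x, hx, hxm, hlatest⟩
  · have hm1 := hnone _ (enum_mem_Icc him (mem_Icc.2 ⟨le_rfl, hn⟩))
    rw [AoI.eq_of_lt_arrivalTime hnone]
    unfold arrivalTime at hm1
    exact le_max_of_le_left (by omega)
  have hA := AoI.add_tsel_eq (A0 := A0) hx hxm hlatest
  obtain ⟨j, hj, rfl⟩ := mem_image.1 (him ▸ mem_Dset_of_latest hx hxm hlatest)
  rcases (mem_Icc.1 hj).2.lt_or_eq with hjn | rfl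
  · have hj' : j + 1 ∈ Set.Icc 1 n := ⟨by omega, hjn⟩
    have hlt : i j < i (j + 1) := hmono (mem_Icc.1 hj) hj' (by omega)
    have hnext : m < arrivalTime G s Δ v (i (j + 1)) := by
      by_contra! h
      exact (hlatest _ (enum_mem_Icc him (mem_Icc.2 hj')) h).not_gt hlt
    have htsel := tsel_mono Δ hlt.le
    refine le_max_of_le_right (le_max_of_le_right
      (le_sup_of_le (mem_Icc.2 ⟨Nat.succ_le_succ (mem_Icc.1 hj).1, hjn⟩) ?_))
    unfold arrivalTime at hnext hxm
    simp only [Nat.succ_eq_add_one, Nat.add_sub_cancel]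
    omega
  · rw [hlast] at hA
    exact le_max_of_le_right (le_max_of_le_left (by omega))

theorem exists_peakAoI_le_AoI_add_one :
    ∃ m < T, peakAoI G s Δ k A0 T i n v ≤ AoI G s Δ k A0 v m + 1 := by
  obtain ⟨hn, -⟩ := one_le_and_enum_last hmono him hk
  have harrT : ∀ j ∈ Icc 1 n, arrivalTime G s Δ v (i j) ≤ T := fun j hj =>
    ((arrivalTime_enum_strictMonoOn hmono him).monotoneOn (mem_Icc.1 hj) ⟨hn, le_rfl⟩
      (mem_Icc.1 hj).2).trans hT
  have hpos := one_le_arrivalTime G s Δ v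
  let p : ℕ → Prop := fun a => ∃ m < T, a ≤ AoI G s Δ k A0 v m + 1
  have hmax : ∀ a, p a → ∀ b, p b → p (a ⊔ b) := fun a ha b hb => by
    rcases max_choice a b with h | h <;> rw [h] <;> assumption
  have hTpos : 1 ≤ T := (hpos _).trans hT
  refine hmax _ ?_ _ (hmax _ ?_ _ (sup_induction ⟨T - 1, by omega, Nat.zero_le _⟩ hmax ?_))
  · have h1 := harrT 1 (mem_Icc.2 ⟨le_rfl, hn⟩)
    refine ⟨arrivalTime G s Δ v (i 1) - 1, by have := hpos (i 1); omega, ?_⟩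
    have hlt : arrivalTime G s Δ v (i 1) - 1 < arrivalTime G s Δ v (i 1) := by
      have := hpos (i 1); omega
    rw [AoI_eq_of_lt_arrivalTime_enum_one hmono him hk hlt]
    unfold arrivalTime at hlt ⊢
    omega
  · refine ⟨T - 1, by omega, ?_⟩
    have hsucc := AoI.succ_le (G := G) (s := s) (Δ := Δ) (k := k) (A0 := A0) (v := v) (T - 1)
    rw [Nat.sub_add_cancel hTpos] at hsucc
    have := AoI_add_tsel_of_arrivalTime_last_le (A0 := A0) hmono him hk hT
    omega
  · intro j hj
    have hj' := mem_Icc.1 hj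
    have hjT := harrT j (mem_Icc.2 ⟨by omega, hj'.2⟩)
    refine ⟨arrivalTime G s Δ v (i j) - 1, by have := hpos (i j); omega, ?_⟩
    have hA := AoI_add_tsel_enum_pred (A0 := A0) hmono him hj
    have htsel := tsel_mono Δ
      (hmono.monotoneOn (⟨by omega, by omega⟩ : j - 1 ∈ Set.Icc 1 n) ⟨by omega, hj'.2⟩
        (Nat.sub_le j 1))
    unfold arrivalTime at hA ⊢
    omega

end Peak

end

theorem csSup_sawtooth_eq {ι : Type*} (f : ι → ℕ → ℝ) (T : ℕ) (P : ℝ)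
    (hlt : ∀ v, ∀ m < T, f v m + 1 ≤ P) (hT : ∀ v, f v T ≤ P)
    (hP : ∃ v, ∃ m < T, P ≤ f v m + 1) :
    sSup {x : ℝ | ∃ v, ∃ t : ℝ, 0 ≤ t ∧ t ≤ T ∧ x = f v ⌊t⌋₊ + (t - ⌊t⌋₊)} = P := by
  obtain ⟨v, m, hmT, hPm⟩ := hP
  have hmT' : (m : ℝ) + 1 ≤ T := by exact_mod_cast hmT
  have hsaw : ∀ r : ℝ, 0 ≤ r → r < 1 → ⌊(m : ℝ) + r⌋₊ = m := fun r h0 h1 =>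
    (Nat.floor_eq_iff (by positivity)).2 ⟨by linarith, by linarith⟩
  refine csSup_eq_of_forall_le_of_forall_lt_exists_gt
    ⟨_, v, m, by positivity, by linarith, rfl⟩ ?_ fun w hw => ?_
  · rintro _ ⟨v, t, ht0, htT, rfl⟩
    have hfloor : (⌊t⌋₊ : ℝ) ≤ t := Nat.floor_le ht0
    have hceil : t < ⌊t⌋₊ + 1 := Nat.lt_floor_add_one t
    rcases (Nat.floor_le_of_le htT : ⌊t⌋₊ ≤ T).lt_or_eq with hlt' | heq
    · linarith [hlt v _ hlt']
    · have : (⌊t⌋₊ : ℝ) = T := by exact_mod_cast heq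
      linarith [heq ▸ hT v]
  · obtain ⟨y, ⟨hy0, hy1⟩, hwy⟩ := exists_lt_of_lt_csSup (Set.nonempty_Ico.2 (lt_add_one _))
      (by rw [csSup_Ico (lt_add_one _)]; linarith : w < sSup (Set.Ico (f v m) (f v m + 1)))
    refine ⟨y, ⟨v, m + (y - f v m), by positivity, by linarith, ?_⟩, hwy⟩
    rw [hsaw _ (by linarith) (by linarith)]
    ring

theorem stmt4_general {V : Type*} [Fintype V] (G : SimpleGraph V)
    (s : ℕ → V) (Δ k A0 T : ℕ) (hk : 1 ≤ k)
    (i : V → ℕ → ℕ) (kv : V → ℕ)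
    (hmono : ∀ v, StrictMonoOn (i v) (Set.Icc 1 (kv v)))
    (him : ∀ v, Dset G s Δ k v = (Finset.Icc 1 (kv v)).image (i v))
    (hT : ∀ v, tsel Δ (i v (kv v)) + G.dist (s (i v (kv v))) v ≤ T)
    (P : ℕ)
    (hP : P = Finset.univ.sup (fun v : V =>
      max (A0 + tsel Δ (i v 1) + G.dist (s (i v 1)) v)
        (max (1 + T - tsel Δ k)
          ((Finset.Icc 2 (kv v)).sup (fun j =>
            1 + G.dist (s (i v j)) v + (tsel Δ (i v j) - tsel Δ (i v (j - 1)))))))) :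
    sSup {x : ℝ | ∃ v : V, ∃ t : ℝ, 0 ≤ t ∧ t ≤ (T : ℝ) ∧ x = AoIR G s Δ k A0 v t}
      = (P : ℝ) := by
  rcases isEmpty_or_nonempty V with hV | hV
  · simp [hP]
  change P = univ.sup fun v => peakAoI G s Δ k A0 T (i v) (kv v) v at hP
  have hpeak : ∀ v, peakAoI G s Δ k A0 T (i v) (kv v) v ≤ P := fun v =>
    hP ▸ le_sup (f := fun v => peakAoI G s Δ k A0 T (i v) (kv v) v) (mem_univ v)
  refine csSup_sawtooth_eq (fun v m => AoI G s Δ k A0 v m) T P (fun v m hm => ?_) (fun v => ?_) ?_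
  · exact_mod_cast (AoI_add_one_le_peakAoI hk (hmono v) (him v) (hT v) hm).trans (hpeak v)
  · exact_mod_cast (AoI_le_peakAoI hk (hmono v) (him v) (hT v)).trans (hpeak v)
  · obtain ⟨v, -, hv⟩ := exists_mem_eq_sup univ univ_nonempty
      fun v => peakAoI G s Δ k A0 T (i v) (kv v) v
    obtain ⟨m, hm, hle⟩ := exists_peakAoI_le_AoI_add_one hk (hmono v) (him v) (hT v)
    exact ⟨v, m, hm, by rw [hP, hv]; exact_mod_cast hle⟩

theorem stmt4 {V : Type*} [Fintype V] (G : SimpleGraph V) (hconn : G.Connected)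
    (s : ℕ → V) (Δ k A0 T : ℕ) (hΔ : 1 ≤ Δ) (hk : 1 ≤ k) (hA0 : 1 ≤ A0)
    (i : V → ℕ → ℕ) (kv : V → ℕ)
    (hkv : ∀ v, kv v = (Dset G s Δ k v).card)
    (hi0 : ∀ v, i v 0 = 1)
    (hmono : ∀ v, StrictMonoOn (i v) (Set.Icc 1 (kv v)))
    (him : ∀ v, Dset G s Δ k v = (Finset.Icc 1 (kv v)).image (i v))
    (hT : ∀ v, tsel Δ (i v (kv v)) + G.dist (s (i v (kv v))) v ≤ T)
    (P : ℕ)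
    (hP : P = Finset.univ.sup (fun v : V =>
      max (A0 + tsel Δ (i v 1) + G.dist (s (i v 1)) v)
        (max (1 + T - tsel Δ k)
          ((Finset.Icc 2 (kv v)).sup (fun j =>
            1 + G.dist (s (i v j)) v + (tsel Δ (i v j) - tsel Δ (i v (j - 1)))))))) :
    sSup {x : ℝ | ∃ v : V, ∃ t : ℝ, 0 ≤ t ∧ t ≤ (T : ℝ) ∧ x = AoIR G s Δ k A0 v t}
      = (P : ℝ) :=
  stmt4_general G s Δ k A0 T hk i kv hmono him hT P hP
end

section
/- The average AoI of the network is bounded above as: (1/(nT)) Σ_{v ∈ V} ∫₀^T A(v,t) dt ≤ η + (1/(2T)) · [ 2A₀Δ + (2A₀/n)·Σ_{v ∈ V} dist(s₁, v) + (2Δ/n)·Σ_{v ∈ V} Σ_{x=1}^{k} dist(s_x, v) + (k − 1)²Δ² ], where η = (1/(2T))·[ 2A₀ − 2ΔA₀ + T² + 2ΔT + Δ² − 2Δ + 2(Δ − TΔ − Δ²)k + Δ²k² ]. -/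
open Finset

/- ### Auxiliary development -/

section Aux

open MeasureTheory intervalIntegral
open scoped Interval

noncomputable def cfun {V : Type*} (G : SimpleGraph V) (s : ℕ → V) (Δ k : ℕ) (v : V)
    (x : ℕ) : ℕ :=
  sInf ((fun y => tsel Δ y + G.dist (s y) v) '' Set.Icc x k)

variable {V : Type*} (G : SimpleGraph V) (s : ℕ → V) (Δ k A0 : ℕ) (v : V)

lemma AoI_succ_le (t : ℕ) : AoI G s Δ k A0 v (t+1) ≤ AoI G s Δ k A0 v t + 1 := by
  rw [AoI]
  split
  · next h =>
    obtain ⟨j, hj⟩ := h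
    calc _ ≤ 1 + G.dist (s j) v := Finset.inf'_le _ hj
    _ ≤ _ := by
      have := (Finset.mem_filter.mp hj).2.2
      omega
  · exact le_refl _

lemma AoI_le_add (m : ℕ) : AoI G s Δ k A0 v m ≤ A0 + m := by
  induction m with
  | zero => rw [AoI]; simp
  | succ t ih => have := AoI_succ_le G s Δ k A0 v t; omega

lemma AoI_arrival {x : ℕ} (hx : x ∈ Finset.Icc 1 k) :
    AoI G s Δ k A0 v (tsel Δ x + G.dist (s x) v) ≤ 1 + G.dist (s x) v := by
  have hts : tsel Δ x + G.dist (s x) v = ((x-1)*Δ + G.dist (s x) v) + 1 := by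
    simp [tsel]; omega
  rw [hts, AoI]
  set t := (x-1)*Δ + G.dist (s x) v with ht
  set prev := AoI G s Δ k A0 v t with hprev
  by_cases hd : G.dist (s x) v + 1 ≤ prev
  · have hmem : x ∈ (Finset.Icc 1 k).filter
      (fun j => t + 1 = tsel Δ j + G.dist (s j) v ∧ G.dist (s j) v + 1 ≤ prev) := by
      rw [Finset.mem_filter]
      exact ⟨hx, by simp [tsel]; omega, hd⟩
    rw [dif_pos ⟨x, hmem⟩]
    calc _ ≤ 1 + G.dist (s x) v := Finset.inf'_le _ hmem
    _ ≤ _ := le_refl _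
  · split
    · next h =>
      obtain ⟨j, hj⟩ := h
      calc _ ≤ 1 + G.dist (s j) v := Finset.inf'_le _ hj
      _ ≤ _ := by
        have := (Finset.mem_filter.mp hj).2.2
        omega
    · omega

lemma AoI_after {x : ℕ} (hx : x ∈ Finset.Icc 1 k) (i : ℕ) :
    AoI G s Δ k A0 v (tsel Δ x + G.dist (s x) v + i) ≤ 1 + G.dist (s x) v + i := by
  induction i with
  | zero => simpa using AoI_arrival G s Δ k A0 v hx
  | succ i ih =>
    have h1 := AoI_succ_le G s Δ k A0 v (tsel Δ x + G.dist (s x) v + i)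
    have h2 : AoI G s Δ k A0 v (tsel Δ x + G.dist (s x) v + (i+1))
        = AoI G s Δ k A0 v ((tsel Δ x + G.dist (s x) v + i) + 1) := by ring_nf
    omega

lemma AoI_after' {x : ℕ} (hx : x ∈ Finset.Icc 1 k) {m : ℕ}
    (h : tsel Δ x + G.dist (s x) v ≤ m) :
    AoI G s Δ k A0 v m + tsel Δ x ≤ m + 1 := by
  have := AoI_after G s Δ k A0 v hx (m - (tsel Δ x + G.dist (s x) v))
  rw [show tsel Δ x + G.dist (s x) v + (m - (tsel Δ x + G.dist (s x) v)) = m by omega] at this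
  omega

lemma cfun_wit {x : ℕ} (hxk : x ≤ k) :
    ∃ y, x ≤ y ∧ y ≤ k ∧ tsel Δ y + G.dist (s y) v = cfun G s Δ k v x := by
  have hne : ((fun y => tsel Δ y + G.dist (s y) v) '' Set.Icc x k).Nonempty :=
    ⟨_, ⟨x, ⟨le_refl x, hxk⟩, rfl⟩⟩
  have := Nat.sInf_mem hne
  obtain ⟨y, hy, hval⟩ := this
  exact ⟨y, hy.1, hy.2, hval⟩

lemma cfun_le_a {x y : ℕ} (hxy : x ≤ y) (hyk : y ≤ k) :
    cfun G s Δ k v x ≤ tsel Δ y + G.dist (s y) v :=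
  Nat.sInf_le ⟨y, ⟨hxy, hyk⟩, rfl⟩

lemma cfun_mono {x x' : ℕ} (h : x ≤ x') (h' : x' ≤ k) :
    cfun G s Δ k v x ≤ cfun G s Δ k v x' := by
  obtain ⟨y, hy1, hy2, hy3⟩ := cfun_wit G s Δ k v h'
  rw [← hy3]
  exact cfun_le_a G s Δ k v (le_trans h hy1) hy2

lemma cfun_le_T {T x : ℕ} (hx1 : 1 ≤ x) (hxk : x ≤ k)
    (hT : ∀ y ∈ Dset G s Δ k v, tsel Δ y + G.dist (s y) v ≤ T) :
    cfun G s Δ k v x ≤ T := by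
  classical
  set a := fun y => tsel Δ y + G.dist (s y) v with ha
  set F := (Finset.Icc x k).filter (fun y => a y = cfun G s Δ k v x) with hF
  have hFne : F.Nonempty := by
    obtain ⟨y, hy1, hy2, hy3⟩ := cfun_wit G s Δ k v hxk
    exact ⟨y, Finset.mem_filter.mpr ⟨Finset.mem_Icc.mpr ⟨hy1, hy2⟩, hy3⟩⟩
  set y0 := F.max' hFne with hy0
  have hy0mem := F.max'_mem hFne
  rw [Finset.mem_filter, Finset.mem_Icc] at hy0mem
  have hdset : y0 ∈ Dset G s Δ k v := by
    simp only [Dset, Finset.mem_filter, Finset.mem_Icc]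
    refine ⟨⟨le_trans hx1 hy0mem.1.1, hy0mem.1.2⟩, fun z hz hlt => ?_⟩
    have hcz : cfun G s Δ k v x ≤ a z :=
      cfun_le_a G s Δ k v (le_trans hy0mem.1.1 (le_of_lt hlt)) hz.2
    rcases lt_or_eq_of_le hcz with h | h
    · show a y0 < a z
      rw [hy0mem.2]; exact h
    · exfalso
      have : z ∈ F := Finset.mem_filter.mpr
        ⟨Finset.mem_Icc.mpr ⟨le_trans hy0mem.1.1 (le_of_lt hlt), hz.2⟩, h.symm⟩
      exact absurd (F.le_max' z this) (not_le.mpr hlt)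
  calc cfun G s Δ k v x = a y0 := hy0mem.2.symm
  _ ≤ T := hT y0 hdset

lemma wsum (A0 Δ : ℕ) : ∀ n, 1 ≤ n →
    ∑ x ∈ Finset.Icc 1 n, (if x = 1 then A0 else Δ) = A0 + (n-1)*Δ := by
  intro n
  induction n with
  | zero => omega
  | succ n ih =>
    intro _
    by_cases hn : 1 ≤ n
    · rw [Finset.sum_Icc_succ_top (by omega), ih hn, if_neg (by omega)]
      have : n + 1 - 1 = (n - 1) + 1 := by omega
      rw [this, Nat.add_mul]
      omega
    · have : n = 0 := by omega
      subst this
      simp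

lemma countlem (c : ℕ) : ∀ N : ℕ,
    ∑ m ∈ Finset.range N, (if c ≤ m then 1 else 0) = N - c := by
  intro N
  induction N with
  | zero => simp
  | succ N ih =>
    rw [Finset.sum_range_succ, ih]
    split <;> omega

lemma keylem (hk : 1 ≤ k) (m : ℕ) :
    AoI G s Δ k A0 v m
      + ∑ x ∈ Finset.Icc 1 k,
          (if x = 1 then A0 else Δ) * (if cfun G s Δ k v x ≤ m then 1 else 0)
    ≤ A0 + m := by
  classical
  by_cases h1 : cfun G s Δ k v 1 ≤ m
  · set F := (Finset.Icc 1 k).filter (fun x => cfun G s Δ k v x ≤ m) with hFdef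
    have hFne : F.Nonempty := ⟨1, Finset.mem_filter.mpr ⟨Finset.mem_Icc.mpr ⟨le_refl 1, hk⟩, h1⟩⟩
    set xs := F.max' hFne with hxs
    have hxsmem := F.max'_mem hFne
    rw [Finset.mem_filter, Finset.mem_Icc] at hxsmem
    have hfe : F = Finset.Icc 1 xs := by
      ext z
      rw [Finset.mem_filter, Finset.mem_Icc, Finset.mem_Icc]
      constructor
      · rintro ⟨⟨hz1, hzk⟩, hzc⟩
        exact ⟨hz1, F.le_max' z (Finset.mem_filter.mpr ⟨Finset.mem_Icc.mpr ⟨hz1, hzk⟩, hzc⟩)⟩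
      · rintro ⟨hz1, hzxs⟩
        have hzk : z ≤ k := le_trans hzxs hxsmem.1.2
        exact ⟨⟨hz1, hzk⟩,
          le_trans (cfun_mono G s Δ k v hzxs hxsmem.1.2) hxsmem.2⟩
    have hsum : ∑ x ∈ Finset.Icc 1 k,
        (if x = 1 then A0 else Δ) * (if cfun G s Δ k v x ≤ m then 1 else 0)
        = A0 + (xs - 1) * Δ := by
      have : ∀ x, (if x = 1 then A0 else Δ) * (if cfun G s Δ k v x ≤ m then 1 else 0)
          = if cfun G s Δ k v x ≤ m then (if x = 1 then A0 else Δ) else 0 := by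
        intro x; split <;> simp
      simp_rw [this]
      rw [← Finset.sum_filter, ← hFdef, hfe, wsum A0 Δ xs hxsmem.1.1]
    rw [hsum]
    obtain ⟨y, hy1, hy2, hy3⟩ := cfun_wit G s Δ k v hxsmem.1.2
    have hay : tsel Δ y + G.dist (s y) v ≤ m := by rw [hy3]; exact hxsmem.2
    have haft := AoI_after' G s Δ k A0 v
      (Finset.mem_Icc.mpr ⟨le_trans hxsmem.1.1 hy1, hy2⟩) hay
    have htsy : tsel Δ y = (y - 1) * Δ + 1 := rfl
    have hmul : (xs - 1) * Δ ≤ (y - 1) * Δ := Nat.mul_le_mul_right _ (by omega)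
    omega
  · have hz : ∀ x ∈ Finset.Icc 1 k,
        (if x = 1 then A0 else Δ) * (if cfun G s Δ k v x ≤ m then 1 else 0) = 0 := by
      intro x hx
      rw [Finset.mem_Icc] at hx
      have : ¬ cfun G s Δ k v x ≤ m := fun h =>
        h1 (le_trans (cfun_mono G s Δ k v hx.1 hx.2) h)
      rw [if_neg this, Nat.mul_zero]
    rw [Finset.sum_eq_zero hz, Nat.add_zero]
    exact AoI_le_add G s Δ k A0 v m

lemma sumS (hk : 1 ≤ k) (T : ℕ) :
    ∑ m ∈ Finset.range T, AoI G s Δ k A0 v m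
      + ∑ x ∈ Finset.Icc 1 k, (if x = 1 then A0 else Δ) * (T - cfun G s Δ k v x)
    ≤ A0 * T + ∑ m ∈ Finset.range T, m := by
  classical
  have h := Finset.sum_le_sum (fun m (_ : m ∈ Finset.range T) => keylem G s Δ k A0 v hk m)
  rw [Finset.sum_add_distrib, Finset.sum_add_distrib] at h
  rw [Finset.sum_comm] at h
  simp_rw [← Finset.mul_sum, countlem, Finset.sum_const, Finset.card_range, smul_eq_mul,
    mul_comm T A0] at h
  exact h

lemma pervertex (hΔ : 1 ≤ Δ) (hk : 1 ≤ k) (hA0 : 1 ≤ A0) (T : ℕ) (hT1 : 1 ≤ T)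
    (hTc : ∀ x, 1 ≤ x → x ≤ k → cfun G s Δ k v x ≤ T) :
    2 * (∑ m ∈ Finset.range T, (AoI G s Δ k A0 v m : ℝ)) + T
      ≤ 2*(A0:ℝ) + (T:ℝ)^2 - 2*(Δ:ℝ)*((k:ℝ)-1)*(T:ℝ) + 2*(Δ:ℝ)^2*((k:ℝ)-1)^2
        + 2*(Δ:ℝ)*((k:ℝ)-1)
        + 2*(A0:ℝ)*(G.dist (s 1) v : ℝ)
        + 2*(Δ:ℝ)*∑ x ∈ Finset.Icc 1 k, (G.dist (s x) v : ℝ) := by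
  classical
  set c := cfun G s Δ k v with hc
  have hins : Finset.Icc 1 k = insert 1 (Finset.Icc 2 k) := by
    ext z; simp only [Finset.mem_Icc, Finset.mem_insert]; omega
  have hsplit : ∑ x ∈ Finset.Icc 1 k, (if x = 1 then A0 else Δ) * (T - c x)
      = A0 * (T - c 1) + ∑ x ∈ Finset.Icc 2 k, Δ * (T - c x) := by
    rw [hins, Finset.sum_insert (by simp), if_pos rfl]
    congr 1
    apply Finset.sum_congr rfl
    intro x hx
    rw [Finset.mem_Icc] at hx
    rw [if_neg (by omega)]
  have hN := sumS G s Δ k A0 v hk T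
  rw [hsplit] at hN
  have H1 : (∑ m ∈ Finset.range T, (AoI G s Δ k A0 v m : ℝ))
      + (A0:ℝ) * ((T:ℝ) - (c 1 : ℝ))
      + ∑ x ∈ Finset.Icc 2 k, (Δ:ℝ) * ((T:ℝ) - (c x : ℝ))
      ≤ (A0:ℝ) * (T:ℝ) + ∑ m ∈ Finset.range T, (m:ℝ) := by
    have := (Nat.cast_le (α := ℝ)).mpr hN
    push_cast at this
    have e1 : ((T - c 1 : ℕ) : ℝ) = (T:ℝ) - (c 1 : ℝ) :=
      Nat.cast_sub (hTc 1 le_rfl hk)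
    have e2 : ∀ x ∈ Finset.Icc 2 k, ((T - c x : ℕ) : ℝ) = (T:ℝ) - (c x : ℝ) := by
      intro x hx
      rw [Finset.mem_Icc] at hx
      exact Nat.cast_sub (hTc x (by omega) hx.2)
    rw [e1] at this
    calc _ ≤ (∑ m ∈ Finset.range T, (AoI G s Δ k A0 v m : ℝ))
        + (A0:ℝ) * ((T:ℝ) - (c 1 : ℝ))
        + ∑ x ∈ Finset.Icc 2 k, (Δ:ℝ) * ((T - c x : ℕ) : ℝ) := by
          apply le_of_eq; congr 1
          apply Finset.sum_congr rfl
          intro x hx; rw [e2 x hx]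
    _ ≤ _ := by linarith [this]
  have H2 : 2 * (∑ m ∈ Finset.range T, (m:ℝ)) = (T:ℝ)^2 - T := by
    have := Finset.sum_range_id_mul_two T
    have hc2 : ((∑ m ∈ Finset.range T, m) * 2 : ℕ) = ((T * (T-1) : ℕ) : ℝ) := by
      exact_mod_cast congrArg (Nat.cast (R := ℝ)) this
    push_cast [Nat.cast_sub hT1] at hc2
    linarith
  have hcard : ((Finset.Icc 2 k).card : ℝ) = (k:ℝ) - 1 := by
    rw [Nat.card_Icc]
    rw [Nat.cast_sub (by omega)]
    push_cast; ring
  have H3 : ((k:ℝ) - 1) * ((Δ:ℝ)*(T:ℝ) - (Δ:ℝ)*(((k:ℝ)-1)*(Δ:ℝ)+1))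
      - (Δ:ℝ) * ∑ x ∈ Finset.Icc 2 k, (G.dist (s x) v : ℝ)
      ≤ ∑ x ∈ Finset.Icc 2 k, (Δ:ℝ) * ((T:ℝ) - (c x : ℝ)) := by
    have hterm : ∀ x ∈ Finset.Icc 2 k,
        (Δ:ℝ)*(T:ℝ) - (Δ:ℝ)*(((k:ℝ)-1)*(Δ:ℝ)+1) - (Δ:ℝ)*(G.dist (s x) v : ℝ)
        ≤ (Δ:ℝ) * ((T:ℝ) - (c x : ℝ)) := by
      intro x hx
      rw [Finset.mem_Icc] at hx
      have h1 : c x ≤ (k-1)*Δ + 1 + G.dist (s x) v := by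
        have h2 : c x ≤ tsel Δ x + G.dist (s x) v := cfun_le_a G s Δ k v le_rfl hx.2
        have h3 : (x-1)*Δ ≤ (k-1)*Δ := Nat.mul_le_mul_right _ (by omega)
        have h4 : tsel Δ x = (x-1)*Δ + 1 := rfl
        omega
      have h1' : (c x : ℝ) ≤ ((k:ℝ)-1)*(Δ:ℝ) + 1 + (G.dist (s x) v : ℝ) := by
        have := (Nat.cast_le (α := ℝ)).mpr h1
        push_cast [Nat.cast_sub hk] at this
        linarith
      have hΔ0 : (0:ℝ) ≤ (Δ:ℝ) := Nat.cast_nonneg Δ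
      nlinarith
    calc _ ≤ ∑ x ∈ Finset.Icc 2 k,
        ((Δ:ℝ)*(T:ℝ) - (Δ:ℝ)*(((k:ℝ)-1)*(Δ:ℝ)+1) - (Δ:ℝ)*(G.dist (s x) v : ℝ)) := by
          rw [Finset.sum_sub_distrib, Finset.sum_const, ← Finset.mul_sum, nsmul_eq_mul, hcard]
    _ ≤ _ := Finset.sum_le_sum hterm
  have H4 : (A0:ℝ) * (c 1 : ℝ) ≤ (A0:ℝ) * (1 + (G.dist (s 1) v : ℝ)) := by
    have h1 : c 1 ≤ 1 + G.dist (s 1) v := by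
      have h2 : c 1 ≤ tsel Δ 1 + G.dist (s 1) v := cfun_le_a G s Δ k v le_rfl hk
      have h4 : tsel Δ 1 = 1 := by simp [tsel]
      omega
    have h1' : (c 1 : ℝ) ≤ 1 + (G.dist (s 1) v : ℝ) := by exact_mod_cast h1
    have : (0:ℝ) ≤ (A0:ℝ) := Nat.cast_nonneg A0
    nlinarith
  have H5 : (Δ:ℝ) * ∑ x ∈ Finset.Icc 2 k, (G.dist (s x) v : ℝ)
      ≤ (Δ:ℝ) * ∑ x ∈ Finset.Icc 1 k, (G.dist (s x) v : ℝ) := by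
    apply mul_le_mul_of_nonneg_left _ (Nat.cast_nonneg Δ)
    apply Finset.sum_le_sum_of_subset_of_nonneg
    · apply Finset.Icc_subset_Icc_left; omega
    · intro x _ _; positivity
  linarith [H1, H2, H3, H4, H5]

lemma aoir_ae (m : ℕ) :
    ∀ᵐ t : ℝ, t ∈ Set.uIoc (m:ℝ) ((m:ℝ)+1) →
      AoIR G s Δ k A0 v t = (AoI G s Δ k A0 v m : ℝ) + (t - m) := by
  have hsing : ∀ᵐ t : ℝ, t ≠ (m:ℝ)+1 :=
    MeasureTheory.ae_iff.mpr (by simpa using Real.volume_singleton (a := (m:ℝ)+1))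
  filter_upwards [hsing] with t ht htmem
  rw [Set.uIoc_of_le (by linarith : (m:ℝ) ≤ (m:ℝ)+1)] at htmem
  obtain ⟨h1, h2⟩ := htmem
  have hfl : ⌊t⌋₊ = m := by
    rw [Nat.floor_eq_iff (le_trans (Nat.cast_nonneg m) (le_of_lt h1))]
    exact ⟨le_of_lt h1, lt_of_le_of_ne h2 ht⟩
  rw [AoIR, hfl]

lemma aoir_intinteg (m : ℕ) :
    IntervalIntegrable (AoIR G s Δ k A0 v) MeasureTheory.volume (m:ℝ) ((m:ℝ)+1) := by
  have hg : IntervalIntegrable (fun t => (AoI G s Δ k A0 v m : ℝ) + (t - m))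
      MeasureTheory.volume (m:ℝ) ((m:ℝ)+1) :=
    (continuous_const.add (continuous_id.sub continuous_const)).intervalIntegrable _ _
  apply hg.congr_ae
  have := aoir_ae G s Δ k A0 v m
  rw [Filter.EventuallyEq]
  rw [MeasureTheory.ae_restrict_iff' measurableSet_uIoc]
  filter_upwards [this] with t ht htmem
  exact (ht htmem).symm

lemma aoir_integral (m : ℕ) :
    ∫ t in (m:ℝ)..((m:ℝ)+1), AoIR G s Δ k A0 v t = (AoI G s Δ k A0 v m : ℝ) + 1/2 := by
  rw [intervalIntegral.integral_congr_ae (aoir_ae G s Δ k A0 v m)]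
  have h1 := intervalIntegral.integral_comp_sub_right
    (a := (m:ℝ)) (b := (m:ℝ)+1) (fun t => ((AoI G s Δ k A0 v m : ℝ) + t)) (m:ℝ)
  simp only [add_sub_cancel_left, sub_self] at h1
  rw [h1]
  rw [intervalIntegral.integral_add (intervalIntegrable_const)
    (intervalIntegral.intervalIntegrable_id), intervalIntegral.integral_const,
    integral_id]
  norm_num

lemma aoir_total (T : ℕ) :
    ∫ t in (0:ℝ)..(T:ℝ), AoIR G s Δ k A0 v t
      = ∑ m ∈ Finset.range T, ((AoI G s Δ k A0 v m : ℝ) + 1/2) := by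
  have h := intervalIntegral.sum_integral_adjacent_intervals
    (a := fun i : ℕ => (i:ℝ)) (n := T) (f := AoIR G s Δ k A0 v)
    (μ := MeasureTheory.volume) (fun i _ => by
      have := aoir_intinteg G s Δ k A0 v i
      convert this using 2
      push_cast; ring)
  norm_num at h
  rw [← h]
  apply Finset.sum_congr rfl
  intro m _
  exact aoir_integral G s Δ k A0 v m

end Aux

theorem stmt11 {V : Type*} [Fintype V] (G : SimpleGraph V) (hconn : G.Connected)
    (s : ℕ → V) (Δ k A0 T : ℕ) (hΔ : 1 ≤ Δ) (hk : 1 ≤ k) (hA0 : 1 ≤ A0)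
    (hT : ∀ v : V, ∀ x ∈ Dset G s Δ k v, tsel Δ x + G.dist (s x) v ≤ T) :
    (1 / ((Fintype.card V : ℝ) * T)) *
        ∑ v : V, ∫ t in (0:ℝ)..(T:ℝ), AoIR G s Δ k A0 v t
      ≤ (1 / (2 * (T : ℝ))) *
          (2 * (A0 : ℝ) - 2 * Δ * A0 + T ^ 2 + 2 * Δ * T + (Δ : ℝ) ^ 2 - 2 * Δ
            + 2 * ((Δ : ℝ) - T * Δ - (Δ : ℝ) ^ 2) * k + (Δ : ℝ) ^ 2 * k ^ 2)
        + (1 / (2 * (T : ℝ))) *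
          (2 * (A0 : ℝ) * Δ
            + (2 * (A0 : ℝ) / (Fintype.card V : ℝ)) * ∑ v : V, (G.dist (s 1) v : ℝ)
            + (2 * (Δ : ℝ) / (Fintype.card V : ℝ)) *
                ∑ v : V, ∑ x ∈ Finset.Icc 1 k, (G.dist (s x) v : ℝ)
            + ((k : ℝ) - 1) ^ 2 * (Δ : ℝ) ^ 2) := by
  classical
  have hne : Nonempty V := hconn.nonempty
  obtain ⟨v0⟩ := hne
  have hkD : ∀ v : V, k ∈ Dset G s Δ k v := by
    intro v
    simp only [Dset, Finset.mem_filter, Finset.mem_Icc]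
    exact ⟨⟨hk, le_rfl⟩, fun y hy hlt => by omega⟩
  have hT1 : 1 ≤ T := by
    have := hT v0 k (hkD v0)
    have h2 : 1 ≤ tsel Δ k := by simp [tsel]
    omega
  have hTc : ∀ v : V, ∀ x, 1 ≤ x → x ≤ k → cfun G s Δ k v x ≤ T := by
    intro v x hx1 hxk
    exact cfun_le_T G s Δ k v hx1 hxk (hT v)
  have hn : (0:ℝ) < (Fintype.card V : ℝ) := by
    have := Fintype.card_pos_iff.mpr ⟨v0⟩
    exact_mod_cast this
  have hT0 : (0:ℝ) < (T:ℝ) := by exact_mod_cast hT1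
  -- rewrite each integral
  have hint : ∀ v : V, ∫ t in (0:ℝ)..(T:ℝ), AoIR G s Δ k A0 v t
      = (∑ m ∈ Finset.range T, (AoI G s Δ k A0 v m : ℝ)) + (T:ℝ)/2 := by
    intro v
    rw [aoir_total G s Δ k A0 v T, Finset.sum_add_distrib, Finset.sum_const,
      Finset.card_range]
    push_cast
    ring
  -- per-vertex bound on the integral
  set C : ℝ := 2*(A0:ℝ) + (T:ℝ)^2 - 2*(Δ:ℝ)*((k:ℝ)-1)*(T:ℝ) + 2*(Δ:ℝ)^2*((k:ℝ)-1)^2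
      + 2*(Δ:ℝ)*((k:ℝ)-1) with hC
  have hpv : ∀ v : V, ∫ t in (0:ℝ)..(T:ℝ), AoIR G s Δ k A0 v t
      ≤ (C + 2*(A0:ℝ)*(G.dist (s 1) v : ℝ)
          + 2*(Δ:ℝ)*∑ x ∈ Finset.Icc 1 k, (G.dist (s x) v : ℝ)) / 2 := by
    intro v
    rw [hint v]
    have := pervertex G s Δ k A0 v hΔ hk hA0 T hT1 (hTc v)
    rw [hC]
    linarith [this]
  have hsum : ∑ v : V, ∫ t in (0:ℝ)..(T:ℝ), AoIR G s Δ k A0 v t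
      ≤ ∑ v : V, (C + 2*(A0:ℝ)*(G.dist (s 1) v : ℝ)
          + 2*(Δ:ℝ)*∑ x ∈ Finset.Icc 1 k, (G.dist (s x) v : ℝ)) / 2 :=
    Finset.sum_le_sum (fun v _ => hpv v)
  have hfac : (0:ℝ) ≤ 1 / ((Fintype.card V : ℝ) * T) := by positivity
  calc (1 / ((Fintype.card V : ℝ) * T)) *
        ∑ v : V, ∫ t in (0:ℝ)..(T:ℝ), AoIR G s Δ k A0 v t
      ≤ (1 / ((Fintype.card V : ℝ) * T)) *
        ∑ v : V, (C + 2*(A0:ℝ)*(G.dist (s 1) v : ℝ)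
          + 2*(Δ:ℝ)*∑ x ∈ Finset.Icc 1 k, (G.dist (s x) v : ℝ)) / 2 :=
        mul_le_mul_of_nonneg_left hsum hfac
  _ = _ := by
      rw [hC]
      have hrw : ∑ v : V, ((2*(A0:ℝ) + (T:ℝ)^2 - 2*(Δ:ℝ)*((k:ℝ)-1)*(T:ℝ)
            + 2*(Δ:ℝ)^2*((k:ℝ)-1)^2 + 2*(Δ:ℝ)*((k:ℝ)-1))
            + 2*(A0:ℝ)*(G.dist (s 1) v : ℝ)
            + 2*(Δ:ℝ)*∑ x ∈ Finset.Icc 1 k, (G.dist (s x) v : ℝ)) / 2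
          = ((Fintype.card V : ℝ) * (2*(A0:ℝ) + (T:ℝ)^2 - 2*(Δ:ℝ)*((k:ℝ)-1)*(T:ℝ)
            + 2*(Δ:ℝ)^2*((k:ℝ)-1)^2 + 2*(Δ:ℝ)*((k:ℝ)-1))
            + 2*(A0:ℝ)*∑ v : V, (G.dist (s 1) v : ℝ)
            + 2*(Δ:ℝ)*∑ v : V, ∑ x ∈ Finset.Icc 1 k, (G.dist (s x) v : ℝ)) / 2 := by
        rw [← Finset.sum_div]
        congr 1
        rw [Finset.sum_add_distrib, Finset.sum_add_distrib, Finset.sum_const,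
          Finset.card_univ, nsmul_eq_mul, ← Finset.mul_sum, ← Finset.mul_sum]
      rw [hrw]
      field_simp
      ring
end
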